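/- arXiv:2409.02946 — 6 statements merged into one kernel-verified Lean document; each statement's English description precedes it below -/
import Mathlib

section
/- Define S : ℕ → ℤ by S(0) = 0, S(1) = -q, and S(i) = -q - S(i-2) - 3·S(i-1) for i ≥ 2, where q is an integer. Then for all i, S(i) = (-1)^i · q · F(i) · F(i+1), where F is the Fibonacci sequence. -/
lemma fibaux : ∀ i : ℕ, ((Nat.fib (i+1)):ℤ)^2 - (Nat.fib (i+1):ℤ) * (Nat.fib i:ℤ) - (Nat.fib i:ℤ)^2 = (-1)^i := by
  intro i
  induction i with
  | zero => simp
  | succ n ih =>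
    rw [Nat.fib_add_two]
    push_cast
    push_cast at ih
    ring_nf
    ring_nf at ih
    linarith

theorem stmt0 (q : ℤ) (S : ℕ → ℤ) (h0 : S 0 = 0) (h1 : S 1 = -q)
    (hrec : ∀ i, S (i + 2) = -q - S i - 3 * S (i + 1)) :
    ∀ i, S i = (-1) ^ i * q * (Nat.fib i : ℤ) * (Nat.fib (i + 1) : ℤ) := by
  intro i
  induction i using Nat.twoStepInduction with
  | zero => simpa using h0
  | one => simp [h1]
  | more n ih1 ih2 =>
    have key := fibaux n
    rw [hrec, ih1, ih2, Nat.fib_add_two, Nat.fib_add_two (n := n+1), Nat.fib_add_two]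
    push_cast
    push_cast at key
    have h : ((-1:ℤ)^n)^2 = 1 := by
      rw [← pow_mul, mul_comm, pow_mul]; norm_num
    linear_combination (q*(-1:ℤ)^n) * key + q * h
end

section
/- Let q and k be integers with k ≥ 2, and define S : ℕ → ℤ by S(0)=0, S(1)=-q, S(i) = -q - S(i-2) - 3·S(i-1). Let α(k) be the restricted period of the Fibonacci sequence mod k. If i ≡ 0 (mod α(k)) or i ≡ -1 (mod α(k)), then S(i) ≡ 0 (mod k). -/
private lemma cassini' : ∀ n : ℕ, ((Nat.fib (n+1) : ℤ))^2 - Nat.fib (n+1) * Nat.fib n - (Nat.fib n : ℤ)^2 = (-1)^n := by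
  intro n
  induction n with
  | zero => simp
  | succ m ih =>
    rw [Nat.fib_add_two]
    push_cast
    push_cast at ih
    ring_nf
    ring_nf at ih
    linarith

theorem stmt5 (q : ℤ) (k : ℕ) (hk : 2 ≤ k) (S : ℕ → ℤ)
    (h0 : S 0 = 0) (h1 : S 1 = -q)
    (hrec : ∀ i, S (i + 2) = -q - S i - 3 * S (i + 1))
    (α : ℕ) (hα : IsLeast {n : ℕ | 0 < n ∧ k ∣ Nat.fib n} α) :
    ∀ i : ℕ, (i % α = 0 ∨ (i + 1) % α = 0) → (k : ℤ) ∣ S i := by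
  have key : ∀ i : ℕ, S i = (-1)^i * q * Nat.fib i * Nat.fib (i+1) := by
    intro i
    induction i using Nat.twoStepInduction with
    | zero => simp [h0]
    | one => simp [h1]
    | more n ihn ihn1 =>
      have cas := cassini' n
      have hsq : ((-1:ℤ)^n) * ((-1:ℤ)^n) = 1 := by
        rw [← pow_add, ← two_mul, pow_mul]; norm_num
      have e2 : (Nat.fib (n+2) : ℤ) = Nat.fib n + Nat.fib (n+1) := by
        rw [Nat.fib_add_two]; push_cast; ring
      have e3 : (Nat.fib (n+3) : ℤ) = Nat.fib n + 2 * Nat.fib (n+1) := by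
        rw [show n+3 = (n+1)+2 from rfl, Nat.fib_add_two, Nat.fib_add_two]; push_cast; ring
      rw [hrec n, ihn, ihn1]
      simp only [show n+1+1 = n+2 from rfl, show n+2+1 = n+3 from rfl, e2, e3,
        pow_succ]
      have hsq2 : ((-1:ℤ))^(n*2) = 1 := by rw [mul_comm, pow_mul]; norm_num
      linear_combination ((-1:ℤ)^n*q)*cas + (-q)*hsq + (2*q)*hsq2
  obtain ⟨⟨hαpos, hαdvd⟩, -⟩ := hα
  intro i hi
  rw [key i]
  rcases hi with h | h
  · have hdvd : k ∣ Nat.fib i := dvd_trans hαdvd (Nat.fib_dvd _ _ (Nat.dvd_iff_mod_eq_zero.mpr h))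
    exact Dvd.dvd.mul_right (Dvd.dvd.mul_left (Int.natCast_dvd_natCast.mpr hdvd) _) _
  · have hdvd : k ∣ Nat.fib (i+1) := dvd_trans hαdvd (Nat.fib_dvd _ _ (Nat.dvd_iff_mod_eq_zero.mpr h))
    exact Dvd.dvd.mul_left (Int.natCast_dvd_natCast.mpr hdvd) _
end

section
/- For positive integers k₁ and k₂, α(lcm(k₁,k₂)) = lcm(α(k₁), α(k₂)), where α(k) is the least positive integer n with k ∣ F(n). -/
lemma fib_entry_dvd_iff (k α : ℕ) (h : IsLeast {n : ℕ | 0 < n ∧ k ∣ Nat.fib n} α) :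
    ∀ n, k ∣ Nat.fib n ↔ α ∣ n := by
  obtain ⟨⟨hαpos, hαdvd⟩, hmin⟩ := h
  intro n
  constructor
  · intro hn
    rcases Nat.eq_zero_or_pos n with rfl | hn0
    · exact dvd_zero _
    have hg : k ∣ Nat.fib (Nat.gcd α n) := by
      rw [Nat.fib_gcd]; exact Nat.dvd_gcd hαdvd hn
    have hgpos : 0 < Nat.gcd α n := Nat.gcd_pos_of_pos_left _ hαpos
    have h1 := hmin ⟨hgpos, hg⟩
    have h2 : Nat.gcd α n = α := le_antisymm (Nat.gcd_le_left _ hαpos) h1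
    exact h2 ▸ Nat.gcd_dvd_right α n
  · intro hd; exact dvd_trans hαdvd (Nat.fib_dvd _ _ hd)

theorem stmt7 (k₁ k₂ : ℕ) (hk₁ : 0 < k₁) (hk₂ : 0 < k₂)
    (α₁ α₂ a : ℕ)
    (hα₁ : IsLeast {n : ℕ | 0 < n ∧ k₁ ∣ Nat.fib n} α₁)
    (hα₂ : IsLeast {n : ℕ | 0 < n ∧ k₂ ∣ Nat.fib n} α₂)
    (ha : IsLeast {n : ℕ | 0 < n ∧ Nat.lcm k₁ k₂ ∣ Nat.fib n} a) :
    a = Nat.lcm α₁ α₂ := by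
  have h1 := fib_entry_dvd_iff k₁ α₁ hα₁
  have h2 := fib_entry_dvd_iff k₂ α₂ hα₂
  have hiff : ∀ n, Nat.lcm k₁ k₂ ∣ Nat.fib n ↔ Nat.lcm α₁ α₂ ∣ n := by
    intro n
    rw [Nat.lcm_dvd_iff, Nat.lcm_dvd_iff, h1, h2]
  obtain ⟨⟨hapos, hadvd⟩, hamin⟩ := ha
  have hα₁pos := hα₁.1.1
  have hα₂pos := hα₂.1.1
  have hlpos : 0 < Nat.lcm α₁ α₂ := Nat.pos_of_ne_zero (by
    simp [Nat.lcm_ne_zero hα₁pos.ne' hα₂pos.ne'])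
  have hle : a ≤ Nat.lcm α₁ α₂ := hamin ⟨hlpos, (hiff _).mpr dvd_rfl⟩
  have hdvd : Nat.lcm α₁ α₂ ∣ a := (hiff a).mp hadvd
  exact le_antisymm hle (Nat.le_of_dvd hapos hdvd)
end

section
/- For every natural number s ≥ 1, the restricted period of the Fibonacci sequence modulo 5^s equals 5^s; that is, the least positive integer n with 5^s ∣ F(n) is n = 5^s. -/
open Nat

private lemma fibcast (k : ℕ) : ((fib (k + 2) : ℕ) : ℤ) = fib k + fib (k + 1) := by
  exact_mod_cast congrArg (Nat.cast (R := ℤ)) (fib_add_two (n := k))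

/-- Addition formula in ℤ, valid for all `n` including `n = 0`. -/
private lemma fibL (m n : ℕ) : (fib (n + m) : ℤ) =
    (fib n : ℤ) * fib (m + 1) + ((fib (n + 1) : ℤ) - fib n) * fib m := by
  induction m using Nat.twoStepInduction with
  | zero => simp
  | one => simp [fib_add_two]
  | more m ih1 ih2 =>
      have h1 := fibcast (n + m)
      have h2 := fibcast m
      have h3 := fibcast (m + 1)
      have e1 : n + (m + 2) = n + m + 2 := by ring
      have e2 : n + (m + 1) = n + m + 1 := by ring
      rw [e1, h1, show m + 2 + 1 = m + 1 + 2 from rfl, h3, h2]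
      rw [e2, show m + 1 + 1 = m + 2 from rfl] at ih2
      linear_combination ih1 + ih2 + (fib n : ℤ) * h2

/-- Cassini's identity. -/
private lemma fibCassini (m : ℕ) :
    (fib (m + 1) : ℤ) ^ 2 - fib (m + 1) * fib m - (fib m : ℤ) ^ 2 = (-1) ^ m := by
  induction m with
  | zero => simp
  | succ m ih =>
      rw [show m + 1 + 1 = m + 2 from rfl, fibcast m]
      linear_combination (-1 : ℤ) * ih

/-- The quintuplication identity: `fib (5m) = 5·F·(5F⁴ + 5(−1)^m F² + 1)`. -/
private lemma fib_five_mul (m : ℕ) : (fib (5 * m) : ℤ) =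
    5 * (fib m : ℤ) * (5 * (fib m : ℤ) ^ 4 + 5 * (-1) ^ m * (fib m : ℤ) ^ 2 + 1) := by
  have hC : ((fib (m + 1) : ℤ)) ^ 2 - fib (m + 1) * fib m - (fib m : ℤ) ^ 2 = (-1) ^ m :=
    fibCassini m
  have hc2 : ((-1 : ℤ) ^ m) ^ 2 = 1 := by
    rw [← pow_mul, mul_comm, pow_mul, neg_one_sq, one_pow]
  have p2 : (fib (2 * m) : ℤ) =
      (fib m : ℤ) * fib (m + 1) + ((fib (m + 1) : ℤ) - fib m) * fib m := by
    rw [two_mul]; exact fibL m m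
  have q2 : (fib (2 * m + 1) : ℤ) =
      (fib (m + 1) : ℤ) * fib (m + 1) + (fib m : ℤ) * fib m := by
    have h := fibL m (m + 1)
    rw [show m + 1 + m = 2 * m + 1 by ring, show m + 1 + 1 = m + 2 from rfl, fibcast m] at h
    rw [h]; ring
  have p3 : (fib (3 * m) : ℤ) =
      (fib (2 * m) : ℤ) * fib (m + 1) + ((fib (2 * m + 1) : ℤ) - fib (2 * m)) * fib m := by
    rw [show 3 * m = 2 * m + m by ring]; exact fibL m (2 * m)
  have q3 : (fib (3 * m + 1) : ℤ) =
      (fib (2 * m + 1) : ℤ) * fib (m + 1) + (fib (2 * m) : ℤ) * fib m := by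
    have h := fibL m (2 * m + 1)
    rw [show 2 * m + 1 + m = 3 * m + 1 by ring, show 2 * m + 1 + 1 = 2 * m + 2 from rfl,
      fibcast (2 * m)] at h
    rw [h]; ring
  have p4 : (fib (4 * m) : ℤ) =
      (fib (3 * m) : ℤ) * fib (m + 1) + ((fib (3 * m + 1) : ℤ) - fib (3 * m)) * fib m := by
    rw [show 4 * m = 3 * m + m by ring]; exact fibL m (3 * m)
  have q4 : (fib (4 * m + 1) : ℤ) =
      (fib (3 * m + 1) : ℤ) * fib (m + 1) + (fib (3 * m) : ℤ) * fib m := by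
    have h := fibL m (3 * m + 1)
    rw [show 3 * m + 1 + m = 4 * m + 1 by ring, show 3 * m + 1 + 1 = 3 * m + 2 from rfl,
      fibcast (3 * m)] at h
    rw [h]; ring
  have p5 : (fib (5 * m) : ℤ) =
      (fib (4 * m) : ℤ) * fib (m + 1) + ((fib (4 * m + 1) : ℤ) - fib (4 * m)) * fib m := by
    rw [show 5 * m = 4 * m + m by ring]; exact fibL m (4 * m)
  rw [p5, p4, q4, p3, q3, p2, q2]
  linear_combination (25 * (fib m : ℤ) ^ 3 + 5 * (fib m : ℤ) *
      (((fib (m + 1) : ℤ)) ^ 2 - fib (m + 1) * fib m - (fib m : ℤ) ^ 2 + (-1 : ℤ) ^ m)) * hC +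
    5 * (fib m : ℤ) * hc2

private lemma five_dvd_fib_iff (n : ℕ) : 5 ∣ fib n ↔ 5 ∣ n := by
  constructor
  · intro h
    have hg : fib (Nat.gcd 5 n) = Nat.gcd (fib 5) (fib n) := fib_gcd 5 n
    have h5 : fib 5 = 5 := by decide
    rw [h5, Nat.gcd_eq_left h] at hg
    have hdvd : Nat.gcd 5 n ∣ 5 := Nat.gcd_dvd_left 5 n
    rcases (Nat.Prime.eq_one_or_self_of_dvd (by norm_num) _ hdvd) with h1 | h1
    · rw [h1] at hg; simp at hg
    · rw [← h1]; exact Nat.gcd_dvd_right 5 n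
  · intro h
    have := fib_dvd 5 n h
    rwa [show fib 5 = 5 by decide] at this

private lemma key (s : ℕ) (hs : 1 ≤ s) : ∀ n : ℕ, 0 < n → (5 ^ s ∣ fib n ↔ 5 ^ s ∣ n) := by
  induction s, hs using Nat.le_induction with
  | base => intro n _; simpa using five_dvd_fib_iff n
  | succ s hs ih =>
      intro n hn
      constructor
      · intro h
        have h5 : 5 ∣ fib n := dvd_trans (dvd_pow_self 5 (by omega : s + 1 ≠ 0)) h
        have h5n : 5 ∣ n := (five_dvd_fib_iff n).mp h5
        obtain ⟨m, rfl⟩ := h5n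
        have hm : 0 < m := by omega
        have hid : (fib (5 * m) : ℤ) = 5 * (fib m : ℤ) *
            (5 * (fib m : ℤ) ^ 4 + 5 * (-1) ^ m * (fib m : ℤ) ^ 2 + 1) := fib_five_mul m
        set a : ℤ := (fib m : ℤ) with ha
        set K : ℤ := 5 * a ^ 4 + 5 * (-1) ^ m * a ^ 2 + 1 with hK
        have hdz : (5 : ℤ) ^ (s + 1) ∣ 5 * a * K := by
          rw [← hid]; exact_mod_cast Int.natCast_dvd_natCast.mpr h
        obtain ⟨c, hc⟩ := hdz
        have hdz2 : (5 : ℤ) ^ s ∣ a * K := by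
          refine ⟨c, mul_left_cancel₀ (by norm_num : (5:ℤ) ≠ 0) ?_⟩
          linear_combination hc
        have hcop : IsCoprime ((5 : ℤ) ^ s) K := by
          apply IsCoprime.pow_left
          exact ⟨-(a ^ 4 + (-1) ^ m * a ^ 2), 1, by rw [hK]; ring⟩
        have hda : (5 : ℤ) ^ s ∣ a := hcop.dvd_of_dvd_mul_right hdz2
        have hda' : 5 ^ s ∣ fib m := by rw [ha] at hda; exact_mod_cast hda
        have hdm : 5 ^ s ∣ m := (ih m hm).mp hda'
        rw [pow_succ, mul_comm (5 ^ s) 5]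
        exact mul_dvd_mul_left 5 hdm
      · intro h
        have h5n : 5 ∣ n := dvd_trans (dvd_pow_self 5 (by omega : s + 1 ≠ 0)) h
        obtain ⟨m, rfl⟩ := h5n
        have hm : 0 < m := by omega
        have hsm : 5 ^ s ∣ m := by
          obtain ⟨c, hc⟩ := h
          refine ⟨c, Nat.eq_of_mul_eq_mul_left (by norm_num : 0 < 5) ?_⟩
          rw [hc, pow_succ]; ring
        have hfa : 5 ^ s ∣ fib m := (ih m hm).mpr hsm
        have h1 : (5 : ℤ) ^ s ∣ (fib m : ℤ) := by exact_mod_cast hfa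
        have hid : (fib (5 * m) : ℤ) = 5 * (fib m : ℤ) *
            (5 * (fib m : ℤ) ^ 4 + 5 * (-1) ^ m * (fib m : ℤ) ^ 2 + 1) := fib_five_mul m
        have : (5 : ℤ) ^ (s + 1) ∣ (fib (5 * m) : ℤ) := by
          rw [hid, pow_succ]
          exact dvd_trans (mul_dvd_mul h1 (dvd_refl 5))
            ⟨5 * (fib m : ℤ) ^ 4 + 5 * (-1) ^ m * (fib m : ℤ) ^ 2 + 1, by ring⟩
        exact_mod_cast this

theorem stmt8 (s : ℕ) (hs : 1 ≤ s) :
    IsLeast {n : ℕ | 0 < n ∧ 5 ^ s ∣ Nat.fib n} (5 ^ s) := by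
  constructor
  · exact ⟨by positivity, (key s hs (5 ^ s) (by positivity)).mpr dvd_rfl⟩
  · rintro n ⟨hn, hd⟩
    exact Nat.le_of_dvd hn ((key s hs n hn).mp hd)
end

section
/- For s ≥ 3, the restricted period of the Fibonacci sequence modulo 2^s is 2^(s-3)·6 = 3·2^(s-2); that is, the least positive integer n with 2^s ∣ F(n) is 3·2^(s-2). -/
lemma fib_not_even {n : ℕ} (h : ¬ 3 ∣ n) : ¬ 2 ∣ Nat.fib n := by
  intro h2
  have hg1 : Nat.gcd 3 n = 1 := by
    rcases (Nat.prime_three).eq_one_or_self_of_dvd _ (Nat.gcd_dvd_left 3 n) with h1 | h3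
    · exact h1
    · exact absurd (h3 ▸ Nat.gcd_dvd_right 3 n) h
  have hg := Nat.fib_gcd 3 n
  rw [hg1] at hg
  have h3 : Nat.fib 3 = 2 := by norm_num [Nat.fib]
  have : (2:ℕ) ∣ 1 := by
    rw [Nat.fib_one] at hg
    rw [hg]
    exact Nat.dvd_gcd (h3 ▸ dvd_refl 2) h2
  omega

lemma fib_val (k : ℕ) : ∃ c, ¬ 2 ∣ c ∧ Nat.fib (6 * 2 ^ k) = 2 ^ (k + 3) * c := by
  induction k with
  | zero => exact ⟨1, by norm_num, by norm_num [Nat.fib]⟩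
  | succ k ih =>
    obtain ⟨c, hc, hfib⟩ := ih
    set m := 6 * 2 ^ k with hm
    have h2m : 6 * 2 ^ (k + 1) = 2 * m := by ring
    have hodd : ¬ 2 ∣ Nat.fib (m + 1) := by
      apply fib_not_even
      have : (3:ℕ) ∣ m := ⟨2 * 2 ^ k, by ring⟩
      omega
    have hle : Nat.fib m ≤ Nat.fib (m + 1) := Nat.fib_le_fib_succ
    have hkey : 2 * Nat.fib (m + 1) - Nat.fib m
        = 2 * (Nat.fib (m + 1) - 2 ^ (k + 2) * c) := by
      have : Nat.fib m = 2 * (2 ^ (k + 2) * c) := by rw [hfib]; ring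
      omega
    refine ⟨c * (Nat.fib (m + 1) - 2 ^ (k + 2) * c), ?_, ?_⟩
    · intro hd
      rcases (Nat.prime_two.dvd_mul.mp hd) with h | h
      · exact hc h
      · have h1 : 2 ^ (k + 2) * c ≤ Nat.fib (m+1) := by
          calc 2 ^ (k + 2) * c ≤ 2 ^ (k + 3) * c := by
                exact Nat.mul_le_mul_right _ (Nat.pow_le_pow_right (by norm_num) (by omega))
            _ = Nat.fib m := hfib.symm
            _ ≤ _ := hle
        have h2 : (2:ℕ) ∣ 2 ^ (k + 2) * c := ⟨2 ^ (k+1) * c, by ring⟩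
        have : (2:ℕ) ∣ Nat.fib (m + 1) := by omega
        exact hodd this
    · rw [h2m, Nat.fib_two_mul, hkey, hfib]; ring

lemma dvd_split {g k : ℕ} (hg : g ∣ 6 * 2 ^ k) (hne : g ≠ 6 * 2 ^ k) :
    g ∣ 2 ^ (k + 1) ∨ g ∣ 3 * 2 ^ k := by
  have h6 : (6 : ℕ) * 2 ^ k = 3 * 2 ^ (k + 1) := by ring
  rw [h6] at hg hne
  by_cases h3 : 3 ∣ g
  · right
    obtain ⟨h, rfl⟩ := h3
    have hh : h ∣ 2 ^ (k + 1) := (mul_dvd_mul_iff_left (by norm_num : (3:ℕ) ≠ 0)).mp hg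
    obtain ⟨j, hj, rfl⟩ := (Nat.dvd_prime_pow Nat.prime_two).mp hh
    have hjk : j ≤ k := by
      rcases Nat.lt_or_ge j (k+1) with h | h
      · omega
      · exfalso; exact hne (by rw [Nat.le_antisymm hj h])
    exact mul_dvd_mul_left 3 (pow_dvd_pow 2 hjk)
  · left
    have hco : Nat.Coprime g 3 := by
      rcases (Nat.coprime_or_dvd_of_prime Nat.prime_three g) with h | h
      · exact h.symm
      · exact absurd h h3
    exact hco.dvd_of_dvd_mul_left hg

theorem stmt9 (s : ℕ) (hs : 3 ≤ s) :
    IsLeast {n : ℕ | 0 < n ∧ 2 ^ s ∣ Nat.fib n} (3 * 2 ^ (s - 2)) := by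
  obtain ⟨k, rfl⟩ : ∃ k, s = k + 3 := ⟨s - 3, by omega⟩
  have ha : 3 * 2 ^ (k + 3 - 2) = 6 * 2 ^ k := by
    have : k + 3 - 2 = k + 1 := by omega
    rw [this]; ring
  rw [ha]
  obtain ⟨c, hc, hfib⟩ := fib_val k
  constructor
  · refine ⟨by positivity, ?_⟩
    rw [hfib]
    exact ⟨c, rfl⟩
  · rintro n ⟨hn, hdvd⟩
    set a := 6 * 2 ^ k with hadef
    set g := Nat.gcd a n with hgdef
    have hga : g ∣ a := Nat.gcd_dvd_left a n
    have hgn : g ∣ n := Nat.gcd_dvd_right a n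
    have hfg : 2 ^ (k + 3) ∣ Nat.fib g := by
      rw [hgdef, Nat.fib_gcd]
      exact Nat.dvd_gcd (hfib ▸ ⟨c, rfl⟩) hdvd
    have hgeq : g = a := by
      by_contra hne
      rcases dvd_split hga hne with h | h
      · -- g ∣ 2^(k+1) : fib g odd part
        have h1 : Nat.fib g ∣ Nat.fib (2 ^ (k + 1)) := Nat.fib_dvd _ _ h
        have h2 : (2:ℕ) ∣ Nat.fib (2 ^ (k + 1)) :=
          dvd_trans (dvd_trans ⟨2 ^ (k + 2), by ring⟩ hfg) h1
        have h3 : ¬ 3 ∣ 2 ^ (k + 1) := by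
          intro hd
          have := Nat.prime_three.dvd_of_dvd_pow hd
          omega
        exact fib_not_even h3 h2
      · -- g ∣ 3·2^k
        have h1 : 2 ^ (k + 3) ∣ Nat.fib (3 * 2 ^ k) :=
          dvd_trans hfg (Nat.fib_dvd _ _ h)
        rcases Nat.eq_zero_or_pos k with rfl | hk
        · norm_num [Nat.fib] at h1
        · obtain ⟨j, rfl⟩ : ∃ j, k = j + 1 := ⟨k - 1, by omega⟩
          have h32 : 3 * 2 ^ (j + 1) = 6 * 2 ^ j := by ring
          rw [h32] at h1
          obtain ⟨d, hd, hfd⟩ := fib_val j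
          rw [hfd] at h1
          have h2 : 2 ^ (j + 3) * 2 ∣ 2 ^ (j + 3) * d := by
            have : (2:ℕ) ^ (j + 1 + 3) = 2 ^ (j + 3) * 2 := by ring
            rwa [this] at h1
          exact hd ((mul_dvd_mul_iff_left (by positivity : (2:ℕ) ^ (j + 3) ≠ 0)).mp h2)
    have : a ∣ n := hgeq ▸ hgn
    exact Nat.le_of_dvd hn this
end

section
/- If p is an odd prime and α(p^2) ≠ α(p), then for all s ≥ 1, α(p^s) = p^(s-1)·α(p), where α(k) is the least positive integer n with k ∣ F(n). -/
/-!
Let `α = α(p)`. Since `k ∣ F n ↔ α(k) ∣ n`, the hypothesis `α(p²) ≠ α(p)` says exactly that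
`p ∥ F α`. For an odd prime `p` dividing `F n`, the Fibonacci numbers satisfy a
lifting-the-exponent law `v_p(F (m n)) = v_p(F n) + v_p(m)`, read off from
`F (m n) ≡ m F(n-1)^(m-1) F n + (m choose 2) F(n-1)^(m-2) (F n)² (mod (F n)³)`:
the first term dominates because `p ∤ F(n-1)`, and when `m = p` the second one is pushed up
by `p ∣ (p choose 2)`, which fails for `p = 2`. Hence `p^s ∣ F (m α)` iff `p^(s-1) ∣ m`.
-/

open Nat

/-- The first terms of the binomial expansion of `φ^(m n) = (F n φ + F (n - 1))^m`, for
`n = u + 1`; shifting `m` by two keeps all exponents free of truncated subtraction. -/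
theorem fib_mul_expansion (u m : ℕ) : ∃ k l : ℕ,
    fib ((m + 2) * (u + 1)) = (m + 2) * fib u ^ (m + 1) * fib (u + 1)
      + (m + 2).choose 2 * fib u ^ m * fib (u + 1) ^ 2 + k * fib (u + 1) ^ 3 ∧
    fib ((m + 2) * (u + 1) + 1) = fib u ^ (m + 2) + (m + 2) * fib u ^ (m + 1) * fib (u + 1)
      + l * fib (u + 1) ^ 2 := by
  induction m with
  | zero =>
    refine ⟨0, 2, ?_, ?_⟩
    · rw [show 2 * (u + 1) = u + 1 + u + 1 by ring, fib_add, fib_add_two]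
      simp only [Nat.choose_self]
      ring
    · rw [show 2 * (u + 1) + 1 = u + 1 + (u + 1) + 1 by ring, fib_add, fib_add_two]
      ring
  | succ m ih =>
    obtain ⟨k, l, hN, hN₁⟩ := ih
    set N := (m + 2) * (u + 1)
    have hchoose : (m + 3).choose 2 = (m + 2).choose 2 + (m + 2) := by
      rw [Nat.choose_succ_succ', Nat.choose_one_right]; ring
    refine ⟨k * fib u + l, l * fib u + 2 * (m + 2) * fib u ^ (m + 1)
      + ((m + 2).choose 2 * fib u ^ m + k * fib (u + 1) + l) * fib (u + 1), ?_, ?_⟩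
    · rw [show (m + 1 + 2) * (u + 1) = N + u + 1 by ring, fib_add, hN, hN₁, hchoose]
      ring
    · rw [show (m + 1 + 2) * (u + 1) + 1 = N + 1 + u + 1 by ring, fib_add, fib_add_two, hN, hN₁]
      ring

theorem dvd_fib_iff_of_isLeast {k a : ℕ} (h : IsLeast {n | 0 < n ∧ k ∣ fib n} a) (n : ℕ) :
    k ∣ fib n ↔ a ∣ n := by
  refine ⟨fun hn => ?_, fun ha => h.1.2.trans (fib_dvd a n ha)⟩
  rcases n.eq_zero_or_pos with rfl | hpos
  · exact dvd_zero a
  have hgcd : a ≤ Nat.gcd a n :=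
    h.2 ⟨gcd_pos_of_pos_right a hpos, fib_gcd a n ▸ Nat.dvd_gcd h.1.2 hn⟩
  exact gcd_eq_left_iff_dvd.1 (le_antisymm (gcd_le_left n h.1.1) hgcd)

theorem not_dvd_fib_of_dvd_fib_succ {p u : ℕ} (hp : p ≠ 1) (h : p ∣ fib (u + 1)) :
    ¬p ∣ fib u := fun h' =>
  hp (Nat.dvd_one.1 ((fib_coprime_fib_succ u).gcd_eq_one ▸ Nat.dvd_gcd h' h))

section

variable {p : ℕ} [hp : Fact p.Prime]

theorem padicValNat_add_eq_left {x y : ℕ} (hx : x ≠ 0) (hy : p ^ (padicValNat p x + 1) ∣ y) :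
    padicValNat p (x + y) = padicValNat p x := by
  have hxy : x + y ≠ 0 := by omega
  refine le_antisymm (not_lt.1 fun h => ?_) ?_
  · have : p ^ (padicValNat p x + 1) ∣ x + y := (padicValNat_dvd_iff_le hxy).2 h
    exact pow_succ_padicValNat_not_dvd hx ((Nat.dvd_add_left hy).1 this)
  · exact (padicValNat_dvd_iff_le hxy).1
      (pow_padicValNat_dvd.add ((pow_dvd_pow p (le_succ _)).trans hy))

theorem padicValNat_mul_fib_pow_mul_fib_succ {c j u : ℕ} (hc : c ≠ 0) (h : p ∣ fib (u + 1)) :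
    padicValNat p (c * fib u ^ j * fib (u + 1)) =
      padicValNat p c + padicValNat p (fib (u + 1)) := by
  have ha : ¬p ∣ fib u := not_dvd_fib_of_dvd_fib_succ hp.out.ne_one h
  have ha0 : fib u ≠ 0 := fun h0 => ha (h0 ▸ dvd_zero p)
  rw [padicValNat.mul (mul_ne_zero hc (pow_ne_zero _ ha0)) (fib_pos.2 u.succ_pos).ne',
    padicValNat.mul hc (pow_ne_zero _ ha0), padicValNat.pow, padicValNat.eq_zero_of_not_dvd ha,
    mul_zero, add_zero]

theorem padicValNat_fib_mul_of_not_dvd {m n : ℕ} (hn : p ∣ fib n) (hm : ¬p ∣ m) :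
    padicValNat p (fib (m * n)) = padicValNat p (fib n) := by
  obtain _ | u := n
  · simp
  obtain _ | _ | m := m
  · exact absurd (dvd_zero p) hm
  · simp
  set s := padicValNat p (fib (u + 1))
  have hs : 1 ≤ s := one_le_padicValNat_of_dvd (fib_pos.2 u.succ_pos).ne' hn
  have hb2 : p ^ (s + 1) ∣ fib (u + 1) ^ 2 :=
    (pow_dvd_pow p (by omega : s + 1 ≤ s * 2)).trans
      (pow_mul p s 2 ▸ pow_dvd_pow_of_dvd pow_padicValNat_dvd 2)
  have hlead : padicValNat p ((m + 2) * fib u ^ (m + 1) * fib (u + 1)) = s := by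
    rw [padicValNat_mul_fib_pow_mul_fib_succ (by omega) hn, padicValNat.eq_zero_of_not_dvd hm,
      zero_add]
  have hlead0 : (m + 2) * fib u ^ (m + 1) * fib (u + 1) ≠ 0 := fun h0 => by
    rw [h0, padicValNat_zero_right] at hlead; omega
  obtain ⟨k, -, hN, -⟩ := fib_mul_expansion u m
  have htail : p ^ (s + 1) ∣ (m + 2).choose 2 * fib u ^ m * fib (u + 1) ^ 2
      + k * fib (u + 1) ^ 3 :=
    (hb2.mul_left _).add ((hb2.trans (pow_dvd_pow _ (by norm_num))).mul_left k)
  rw [hN, add_assoc, padicValNat_add_eq_left hlead0 (by rwa [hlead]), hlead]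

theorem padicValNat_fib_prime_mul (hodd : Odd p) {n : ℕ} (hn0 : n ≠ 0) (hn : p ∣ fib n) :
    padicValNat p (fib (p * n)) = padicValNat p (fib n) + 1 := by
  obtain ⟨u, rfl⟩ : ∃ u, n = u + 1 := exists_eq_succ_of_ne_zero hn0
  have hp3 : 2 < p := by
    obtain ⟨r, rfl⟩ := hodd
    have := hp.out.two_le
    omega
  have hchoose : p ∣ p.choose 2 := hp.out.dvd_choose_self two_ne_zero hp3
  set s := padicValNat p (fib (u + 1))
  have hs : 1 ≤ s := one_le_padicValNat_of_dvd (fib_pos.2 u.succ_pos).ne' hn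
  have hb : p ^ s ∣ fib (u + 1) := pow_padicValNat_dvd
  have hb2 : p ^ (s + 2) ∣ p * fib (u + 1) ^ 2 :=
    (pow_dvd_pow p (by omega : s + 2 ≤ 1 + s * 2)).trans
      (by rw [pow_add, pow_one, pow_mul]; exact mul_dvd_mul_left p (pow_dvd_pow_of_dvd hb 2))
  have hb3 : p ^ (s + 2) ∣ fib (u + 1) ^ 3 :=
    (pow_dvd_pow p (by omega : s + 2 ≤ s * 3)).trans (pow_mul p s 3 ▸ pow_dvd_pow_of_dvd hb 3)
  obtain ⟨m, rfl⟩ : ∃ m, p = m + 2 := ⟨p - 2, by omega⟩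
  have hlead : padicValNat (m + 2) ((m + 2) * fib u ^ (m + 1) * fib (u + 1)) = s + 1 := by
    rw [padicValNat_mul_fib_pow_mul_fib_succ (by omega) hn, padicValNat_self, add_comm]
  have hlead0 : (m + 2) * fib u ^ (m + 1) * fib (u + 1) ≠ 0 := fun h0 => by
    rw [h0, padicValNat_zero_right] at hlead; omega
  obtain ⟨k, -, hN, -⟩ := fib_mul_expansion u m
  obtain ⟨c, hc⟩ := hchoose
  have htail : (m + 2) ^ (s + 2) ∣ (m + 2).choose 2 * fib u ^ m * fib (u + 1) ^ 2
      + k * fib (u + 1) ^ 3 :=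
    (hb2.trans ⟨c * fib u ^ m, by rw [hc]; ring⟩).add (hb3.mul_left k)
  rw [hN, add_assoc, padicValNat_add_eq_left hlead0 (by rwa [hlead]), hlead]

theorem padicValNat_fib_prime_pow_mul (hodd : Odd p) {n : ℕ} (hn0 : n ≠ 0) (hn : p ∣ fib n)
    (k : ℕ) : padicValNat p (fib (p ^ k * n)) = padicValNat p (fib n) + k := by
  induction k with
  | zero => simp
  | succ k ih =>
    have hkn : p ^ k * n ≠ 0 := mul_ne_zero (pow_ne_zero k hp.out.ne_zero) hn0
    rw [pow_succ', mul_assoc, padicValNat_fib_prime_mul hodd hkn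
      (hn.trans (fib_dvd _ _ (dvd_mul_left n _))), ih, add_assoc]

theorem padicValNat_fib_mul (hodd : Odd p) {m n : ℕ} (hm : m ≠ 0) (hn0 : n ≠ 0)
    (hn : p ∣ fib n) : padicValNat p (fib (m * n)) = padicValNat p (fib n) + padicValNat p m := by
  obtain ⟨k, m', hm', rfl⟩ := exists_eq_pow_mul_and_not_dvd hm p hp.out.ne_one
  have hm'0 : m' ≠ 0 := fun h => hm' (h ▸ dvd_zero p)
  rw [show p ^ k * m' * n = m' * (p ^ k * n) by ring, padicValNat_fib_mul_of_not_dvd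
    (hn.trans (fib_dvd _ _ (dvd_mul_left n _))) hm', padicValNat_fib_prime_pow_mul hodd hn0 hn,
    padicValNat.mul (pow_ne_zero k hp.out.ne_zero) hm'0, padicValNat.prime_pow,
    padicValNat.eq_zero_of_not_dvd hm', add_zero]

end

theorem stmt10 (p : ℕ) (hp : p.Prime) (hodd : Odd p)
    (αp αp2 : ℕ)
    (hαp : IsLeast {n : ℕ | 0 < n ∧ p ∣ Nat.fib n} αp)
    (hαp2 : IsLeast {n : ℕ | 0 < n ∧ p ^ 2 ∣ Nat.fib n} αp2)
    (hne : αp2 ≠ αp) :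
    ∀ s : ℕ, 1 ≤ s → ∀ αps : ℕ,
      IsLeast {n : ℕ | 0 < n ∧ p ^ s ∣ Nat.fib n} αps →
      αps = p ^ (s - 1) * αp := by
  have : Fact p.Prime := ⟨hp⟩
  have hα0 : αp ≠ 0 := hαp.1.1.ne'
  have hfib0 : fib αp ≠ 0 := (fib_pos.2 hαp.1.1).ne'
  have hsq : ¬p ^ 2 ∣ fib αp := fun h => hne <| Nat.dvd_antisymm
    ((dvd_fib_iff_of_isLeast hαp2 αp).1 h)
    ((dvd_fib_iff_of_isLeast hαp αp2).1 ((dvd_pow_self p two_ne_zero).trans hαp2.1.2))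
  have hval : padicValNat p (fib αp) = 1 := by
    have := one_le_padicValNat_of_dvd hfib0 hαp.1.2
    have := (padicValNat_dvd_iff_le hfib0).not.1 hsq
    omega
  intro s hs αps hαps
  have hpos : 0 < p ^ (s - 1) * αp := Nat.mul_pos (pow_pos hp.pos _) hαp.1.1
  refine hαps.unique ⟨⟨hpos, ?_⟩, fun n ⟨hn, hdvd⟩ => ?_⟩
  · rw [padicValNat_dvd_iff_le (fib_pos.2 hpos).ne',
      padicValNat_fib_mul hodd (pow_ne_zero _ hp.ne_zero) hα0 hαp.1.2, hval, padicValNat.prime_pow]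
    omega
  · obtain ⟨m, rfl⟩ := (dvd_fib_iff_of_isLeast hαp n).1 ((dvd_pow_self p (by omega)).trans hdvd)
    have hm : m ≠ 0 := by rintro rfl; simp at hn
    rw [padicValNat_dvd_iff_le (fib_pos.2 hn).ne', mul_comm,
      padicValNat_fib_mul hodd hm hα0 hαp.1.2, hval] at hdvd
    have hpm : p ^ (s - 1) ∣ m := (padicValNat_dvd_iff_le hm).2 (by omega)
    exact le_of_dvd hn (mul_comm αp m ▸ mul_dvd_mul_right hpm αp)
end
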